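/- arXiv:2104.05245 — 3 statements merged into one kernel-verified Lean document; each statement's English description precedes it below -/
import Mathlib

section
/- Let f be differentiable with L-Lipschitz gradient and bounded below by f*. Define the gradient descent iterates x_{t+1} = x_t − (1/L)∇f(x_t). Then for every T ≥ 1, (1/T) ∑_{t=1}^T ‖∇f(x_t)‖² ≤ 2L (f(x_1) − f*) / T. -/
/-!
Descent lemma: if `∇f` is `L`-Lipschitz, then `s ↦ f (x + s • v) - s ⟪∇f x, v⟫ - L s² ‖v‖² / 2`
has nonpositive derivative for `s ≥ 0`, so `f (x + v) ≤ f x + ⟪∇f x, v⟫ + L ‖v‖² / 2`.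
With `v = -(1/L) ∇f x` each gradient step lowers `f` by at least `‖∇f x‖² / (2L)`; summing,
the decreases telescope and are bounded by `f x₁ - f*`.
-/

open scoped RealInnerProductSpace

section GradientDescent

variable {E : Type*} [NormedAddCommGroup E] [InnerProductSpace ℝ E] [CompleteSpace E]
  {f : E → ℝ}

theorem DifferentiableAt.hasDerivAt_comp_add_smul {x v : E} {s : ℝ}
    (hf : DifferentiableAt ℝ f (x + s • v)) :
    HasDerivAt (fun s : ℝ => f (x + s • v)) ⟪gradient f (x + s • v), v⟫ s := by
  have hline : HasDerivAt (fun s : ℝ => x + s • v) v s := by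
    simpa using ((hasDerivAt_id s).smul_const v).const_add x
  exact (hasGradientAt_iff_hasFDerivAt.mp hf.hasGradientAt).comp_hasDerivAt s hline

theorem Differentiable.le_add_inner_gradient_add_sq (hf : Differentiable ℝ f) {L : ℝ}
    (hlip : ∀ x y, ‖gradient f x - gradient f y‖ ≤ L * ‖x - y‖) (x v : E) :
    f (x + v) ≤ f x + ⟪gradient f x, v⟫ + L / 2 * ‖v‖ ^ 2 := by
  set g : ℝ → ℝ := fun s => f (x + s • v) - s * ⟪gradient f x, v⟫ - L / 2 * s ^ 2 * ‖v‖ ^ 2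
  set g' : ℝ → ℝ := fun s =>
    ⟪gradient f (x + s • v), v⟫ - ⟪gradient f x, v⟫ - L * s * ‖v‖ ^ 2
  have hg : ∀ s, HasDerivAt g (g' s) s := fun s => by
    have hline := (hf (x + s • v)).hasDerivAt_comp_add_smul
    have hlin := (hasDerivAt_id s).mul_const ⟪gradient f x, v⟫
    have hquad := ((hasDerivAt_pow 2 s).const_mul (L / 2)).mul_const (‖v‖ ^ 2)
    refine ((hline.sub hlin).sub hquad).congr_deriv ?_
    simp only [g', one_mul]
    ring
  have hg'_nonpos : ∀ s, 0 < s → g' s ≤ 0 := fun s hs => by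
    have hinner : ⟪gradient f (x + s • v) - gradient f x, v⟫ ≤ L * s * ‖v‖ ^ 2 :=
      calc ⟪gradient f (x + s • v) - gradient f x, v⟫
          ≤ ‖gradient f (x + s • v) - gradient f x‖ * ‖v‖ := real_inner_le_norm _ _
        _ ≤ L * ‖s • v‖ * ‖v‖ := by
          gcongr
          simpa using hlip (x + s • v) x
        _ = L * s * ‖v‖ ^ 2 := by rw [norm_smul, Real.norm_of_nonneg hs.le]; ring
    rw [inner_sub_left] at hinner
    linarith
  have hanti : AntitoneOn g (Set.Ici 0) := by
    refine antitoneOn_of_hasDerivWithinAt_nonpos (convex_Ici 0)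
      (fun s _ => (hg s).continuousAt.continuousWithinAt)
      (fun s _ => (hg s).hasDerivWithinAt) ?_
    rw [interior_Ici]
    exact hg'_nonpos
  have h10 : g 1 ≤ g 0 := hanti Set.self_mem_Ici (Set.mem_Ici.2 zero_le_one) zero_le_one
  simp only [g, one_smul, zero_smul, add_zero] at h10
  linarith

theorem Differentiable.sq_norm_gradient_le_sub_gradient_step (hf : Differentiable ℝ f) {L : ℝ}
    (hL : 0 < L) (hlip : ∀ x y, ‖gradient f x - gradient f y‖ ≤ L * ‖x - y‖) (x : E) :
    ‖gradient f x‖ ^ 2 ≤ 2 * L * (f x - f (x - (1 / L) • gradient f x)) := by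
  have h := hf.le_add_inner_gradient_add_sq hlip x (-(1 / L) • gradient f x)
  rw [neg_smul, ← sub_eq_add_neg, inner_neg_right, real_inner_smul_right,
    real_inner_self_eq_norm_sq, norm_neg, norm_smul, Real.norm_of_nonneg (by positivity),
    mul_pow] at h
  have hmodel : f x + -(1 / L * ‖gradient f x‖ ^ 2) + L / 2 * ((1 / L) ^ 2 * ‖gradient f x‖ ^ 2)
      = f x - ‖gradient f x‖ ^ 2 / (2 * L) := by
    field_simp
    ring
  rw [← div_le_iff₀' (by positivity)]
  linarith

theorem Differentiable.sum_sq_norm_gradient_le_of_gradient_descent (hf : Differentiable ℝ f)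
    {L : ℝ} (hL : 0 < L) (hlip : ∀ x y, ‖gradient f x - gradient f y‖ ≤ L * ‖x - y‖)
    {x : ℕ → E} (hrec : ∀ t, x (t + 1) = x t - (1 / L) • gradient f (x t)) (T : ℕ) :
    ∑ t ∈ Finset.Icc 1 T, ‖gradient f (x t)‖ ^ 2 ≤ 2 * L * (f (x 1) - f (x (T + 1))) :=
  calc ∑ t ∈ Finset.Icc 1 T, ‖gradient f (x t)‖ ^ 2
      ≤ ∑ t ∈ Finset.Icc 1 T, 2 * L * (f (x t) - f (x (t + 1))) :=
        Finset.sum_le_sum fun t _ => hrec t ▸ hf.sq_norm_gradient_le_sub_gradient_step hL hlip _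
    _ = 2 * L * (f (x 1) - f (x (T + 1))) := by
        rw [← Finset.mul_sum, ← Finset.Ico_add_one_right_eq_Icc, ← neg_sub,
          ← Finset.sum_Ico_sub (fun t => f (x t)) (by omega), ← Finset.sum_neg_distrib]
        simp only [neg_sub]

end GradientDescent

theorem stmt2_general {d : ℕ} (f : EuclideanSpace ℝ (Fin d) → ℝ) (L : ℝ) (hL : 0 < L)
    (hdiff : Differentiable ℝ f)
    (hlip : ∀ x y, ‖gradient f x - gradient f y‖ ≤ L * ‖x - y‖)
    (fstar : ℝ) (hbdd : ∀ x, fstar ≤ f x)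
    (x : ℕ → EuclideanSpace ℝ (Fin d))
    (hrec : ∀ t, x (t + 1) = x t - (1 / L) • gradient f (x t))
    (T : ℕ) :
    (1 / (T : ℝ)) * ∑ t ∈ Finset.Icc 1 T, ‖gradient f (x t)‖ ^ 2
      ≤ 2 * L * (f (x 1) - fstar) / (T : ℝ) := by
  have hsum : ∑ t ∈ Finset.Icc 1 T, ‖gradient f (x t)‖ ^ 2 ≤ 2 * L * (f (x 1) - fstar) :=
    (hdiff.sum_sq_norm_gradient_le_of_gradient_descent hL hlip hrec T).trans
      (by gcongr; exact hbdd _)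
  rw [one_div_mul_eq_div]
  gcongr

theorem stmt2 {d : ℕ} (f : EuclideanSpace ℝ (Fin d) → ℝ) (L : ℝ) (hL : 0 < L)
    (hdiff : Differentiable ℝ f)
    (hlip : ∀ x y, ‖gradient f x - gradient f y‖ ≤ L * ‖x - y‖)
    (fstar : ℝ) (hbdd : ∀ x, fstar ≤ f x)
    (x : ℕ → EuclideanSpace ℝ (Fin d))
    (hrec : ∀ t, x (t + 1) = x t - (1 / L) • gradient f (x t))
    (T : ℕ) (hT : 1 ≤ T) :
    (1 / (T : ℝ)) * ∑ t ∈ Finset.Icc 1 T, ‖gradient f (x t)‖ ^ 2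
      ≤ 2 * L * (f (x 1) - fstar) / (T : ℝ) :=
  stmt2_general f L hL hdiff hlip fstar hbdd x hrec T
end

section
/- In the error-compensated SGD algorithm, define ṽ_t = x_t − γΩ_{t−1} with Ω_t = δ_t + (1/N)∑_{n=1}^N δ_t^{(n)}, where v_t^{(n)} = g_t^{(n)} + δ_{t−1}^{(n)}, δ_t^{(n)} = v_t^{(n)} − Q(v_t^{(n)}), v_t = (1/N)∑_n Q(v_t^{(n)}) + δ_{t−1}, δ_t = v_t − Q(v_t), and x_{t+1} = x_t − γQ(v_t). Then the compensated iterates satisfy ṽ_{t+1} = ṽ_t − γ(1/N)∑_{n=1}^N g_t^{(n)}. -/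
/-! The compensated iterate adds back everything the compressors have dropped so far: each worker's
error `δ` satisfies `Q (v) + δ = v = g + δ_prev`, and the server's error satisfies
`Q (V) + Δ = V = avg Q (v) + Δ_prev`. Summing these, the compressed quantities cancel and only the
average gradient remains. -/

theorem stmt11 {E : Type*} [AddCommGroup E] [Module ℝ E] {N : ℕ} (γ : ℝ)
    (g v : ℕ → Fin N → E) (δ : ℕ → Fin N → E) (V Δ x : ℕ → E) (Q : E → E)
    (hv : ∀ t n, v (t + 1) n = g (t + 1) n + δ t n)
    (hδ : ∀ t n, δ (t + 1) n = v (t + 1) n - Q (v (t + 1) n))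
    (hV : ∀ t, V (t + 1) = (N : ℝ)⁻¹ • ∑ n, Q (v (t + 1) n) + Δ t)
    (hΔ : ∀ t, Δ (t + 1) = V (t + 1) - Q (V (t + 1)))
    (hx : ∀ t, x (t + 2) = x (t + 1) - γ • Q (V (t + 1))) (t : ℕ) :
    x (t + 2) - γ • (Δ (t + 1) + (N : ℝ)⁻¹ • ∑ n, δ (t + 1) n)
      = x (t + 1) - γ • (Δ t + (N : ℝ)⁻¹ • ∑ n, δ t n)
        - γ • ((N : ℝ)⁻¹ • ∑ n, g (t + 1) n) := by
  have worker_errors : ∑ n, δ (t + 1) n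
      = ∑ n, g (t + 1) n + ∑ n, δ t n - ∑ n, Q (v (t + 1) n) := by
    simp only [hδ, hv, Finset.sum_sub_distrib, Finset.sum_add_distrib]
  have server_error : Δ (t + 1)
      = (N : ℝ)⁻¹ • ∑ n, Q (v (t + 1) n) + Δ t - Q (V (t + 1)) := by
    rw [hΔ, hV]
  rw [hx, worker_errors, server_error]
  module
end

section
/- Consider the decentralized recursion X_{t+1} = (X_t − γG_t)W with X_1 having identical columns, where W ∈ ℝ^{N×N} is symmetric doubly stochastic with second largest absolute eigenvalue ρ < 1. Let X̄_t = X_t(𝟙𝟙ᵀ/N). Then for every T, ∑_{t=1}^T ‖X_t − X̄_t‖_F² ≤ (γ²ρ²/(1−ρ)²) ∑_{t=1}^T ‖G_t‖_F². -/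
open Matrix Finset WithLp
open scoped Matrix.Norms.Frobenius

/-!
With `J = 𝟙𝟙ᵀ / N` we have `W J = J W = J² = J`, so the consensus error `D_t = X_t - X_t J`
satisfies `D_1 = 0` and `D_{t+1} = (D_t - γ G_t)(W - J)`. The matrix `W - J` has the eigenvectors
of `W`, with the simple eigenvalue `1` (whose eigenvector is proportional to `𝟙`) replaced by `0`;
hence right multiplication by it contracts the Frobenius norm by `ρ`, and
`‖D_{t+1}‖ ≤ ρ (‖D_t‖ + γ ‖G_t‖)`. Squaring with weights `ρ` and `1 - ρ`,
`(1 - ρ) ‖D_{t+1}‖² ≤ ρ (1 - ρ) ‖D_t‖² + ρ² γ² ‖G_t‖²`, and summing over `t` gives the bound.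
-/

theorem sum_range_sq_le_of_le_mul_add {ρ : ℝ} (hρ0 : 0 ≤ ρ) (hρ1 : ρ < 1) {s g : ℕ → ℝ}
    (hs : ∀ t, 0 ≤ s t) (hs0 : s 0 = 0) (hstep : ∀ t, s (t + 1) ≤ ρ * (s t + g t)) (T : ℕ) :
    ∑ t ∈ range T, s t ^ 2 ≤ ρ ^ 2 / (1 - ρ) ^ 2 * ∑ t ∈ range T, g t ^ 2 := by
  have hρ1' : 0 < 1 - ρ := by linarith
  -- `(a + b)² ≤ a² / ρ + b² / (1 - ρ)`, cleared of denominators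
  have hsq : ∀ t, (1 - ρ) * s (t + 1) ^ 2 ≤ ρ * (1 - ρ) * s t ^ 2 + ρ ^ 2 * g t ^ 2 := by
    intro t
    have h := pow_le_pow_left₀ (hs (t + 1)) (hstep t) 2
    nlinarith [mul_nonneg hρ0 (sq_nonneg ((1 - ρ) * s t - ρ * g t))]
  have hshift : ∑ t ∈ range T, s t ^ 2 ≤ ∑ t ∈ range T, s (t + 1) ^ 2 := by
    have := sum_range_succ' (fun t => s t ^ 2) T
    rw [hs0, sum_range_succ] at this
    linarith [sq_nonneg (s T)]
  have hsum : (1 - ρ) * ∑ t ∈ range T, s t ^ 2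
      ≤ ρ * (1 - ρ) * ∑ t ∈ range T, s t ^ 2 + ρ ^ 2 * ∑ t ∈ range T, g t ^ 2 := by
    calc (1 - ρ) * ∑ t ∈ range T, s t ^ 2 ≤ ∑ t ∈ range T, (1 - ρ) * s (t + 1) ^ 2 := by
          rw [← mul_sum]; exact mul_le_mul_of_nonneg_left hshift hρ1'.le
      _ ≤ _ := by simpa only [mul_sum, ← sum_add_distrib] using sum_le_sum fun t _ => hsq t
  rw [div_mul_eq_mul_div, le_div_iff₀ (by positivity)]
  nlinarith

theorem frobenius_norm_sq_eq_sum_norm_row_sq {m n α : Type*} [Fintype m] [Fintype n]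
    [SeminormedAddCommGroup α] (A : Matrix m n α) :
    ‖A‖ ^ 2 = ∑ i, ‖toLp 2 (A i)‖ ^ 2 := by
  simp only [PiLp.norm_sq_eq_of_L2, frobenius_norm_def, one_div, Real.rpow_two]
  rw [← Real.rpow_natCast, ← Real.rpow_mul (by positivity)]
  norm_num

theorem frobenius_norm_sq_eq_sum_sq {m n : Type*} [Fintype m] [Fintype n] (A : Matrix m n ℝ) :
    ‖A‖ ^ 2 = ∑ i, ∑ j, A i j ^ 2 := by
  simp [frobenius_norm_sq_eq_sum_norm_row_sq, PiLp.norm_sq_eq_of_L2]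

theorem frobenius_norm_mul_le_of_norm_vecMul_le {l m n α : Type*} [Fintype l] [Fintype m]
    [Fintype n] [SeminormedRing α] {M : Matrix m n α} {ρ : ℝ} (hρ : 0 ≤ ρ)
    (hM : ∀ v, ‖toLp 2 (v ᵥ* M)‖ ≤ ρ * ‖toLp 2 v‖) (A : Matrix l m α) :
    ‖A * M‖ ≤ ρ * ‖A‖ := by
  refine le_of_sq_le_sq ?_ (by positivity)
  rw [mul_pow, frobenius_norm_sq_eq_sum_norm_row_sq, frobenius_norm_sq_eq_sum_norm_row_sq, mul_sum]
  refine sum_le_sum fun i _ => ?_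
  rw [mul_apply_eq_vecMul, ← mul_pow]
  exact pow_le_pow_left₀ (norm_nonneg _) (hM _) 2

theorem EuclideanSpace.norm_toLp_mul_le {ι 𝕜 : Type*} [Fintype ι] [RCLike 𝕜] {μ : ι → 𝕜} {ρ : ℝ}
    (hμ : ∀ i, ‖μ i‖ ≤ ρ) (c : ι → 𝕜) :
    ‖toLp 2 (μ * c)‖ ≤ ρ * ‖toLp 2 c‖ := by
  rcases isEmpty_or_nonempty ι with hι | ⟨⟨i⟩⟩
  · simp [Subsingleton.elim c 0]
  have hρ : 0 ≤ ρ := (norm_nonneg _).trans (hμ i)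
  refine le_of_sq_le_sq ?_ (by positivity)
  simp only [mul_pow, PiLp.norm_sq_eq_of_L2, Pi.mul_apply, norm_mul, mul_sum]
  exact sum_le_sum fun i _ => by gcongr; exact hμ i

theorem OrthonormalBasis.norm_map_le_of_apply_eq_smul {ι 𝕜 E : Type*} [Fintype ι] [RCLike 𝕜]
    [NormedAddCommGroup E] [InnerProductSpace 𝕜 E] (b : OrthonormalBasis ι 𝕜 E) {T : E →ₗ[𝕜] E}
    {μ : ι → 𝕜} (hT : ∀ i, T (b i) = μ i • b i) {ρ : ℝ} (hμ : ∀ i, ‖μ i‖ ≤ ρ) (v : E) :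
    ‖T v‖ ≤ ρ * ‖v‖ := by
  have hTv : T v = b.repr.symm (toLp 2 (μ * b.repr v)) := by
    rw [← b.sum_repr_symm]
    conv_lhs => rw [← b.sum_repr v]
    simp only [map_sum, map_smul, hT, smul_smul, Pi.mul_apply, mul_comm]
  rw [hTv, LinearIsometryEquiv.norm_map, ← b.repr.norm_map v]
  exact EuclideanSpace.norm_toLp_mul_le hμ _

noncomputable def averagingMatrix (n : Type*) [Fintype n] : Matrix n n ℝ :=
  (Fintype.card n : ℝ)⁻¹ • of fun _ _ => 1

section averagingMatrix

variable {m n : Type*} [Fintype n]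

@[simp]
theorem averagingMatrix_apply (i j : n) : averagingMatrix n i j = (Fintype.card n : ℝ)⁻¹ := by
  simp [averagingMatrix]

theorem averagingMatrix_transpose : (averagingMatrix n)ᵀ = averagingMatrix n := by
  ext; simp

theorem averagingMatrix_mulVec (v : n → ℝ) :
    averagingMatrix n *ᵥ v = fun _ => (Fintype.card n : ℝ)⁻¹ * (v ⬝ᵥ 1) := by
  ext; simp [mulVec, dotProduct, sum_mul, mul_comm]

theorem mul_averagingMatrix_of_forall_eq {X : Matrix m n ℝ} (hX : ∀ i j k, X i j = X i k) :
    X * averagingMatrix n = X := by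
  ext i j
  have : Nonempty n := ⟨j⟩
  simp [mul_apply, hX i _ j]
  field_simp

theorem averagingMatrix_mul_self : averagingMatrix n * averagingMatrix n = averagingMatrix n :=
  mul_averagingMatrix_of_forall_eq fun _ _ _ => by simp

theorem averagingMatrix_mulVec_one : averagingMatrix n *ᵥ 1 = 1 := by
  ext i
  have : Nonempty n := ⟨i⟩
  simp [averagingMatrix_mulVec]

theorem mul_averagingMatrix_of_mulVec_one {W : Matrix n n ℝ} (hW : W *ᵥ 1 = 1) :
    W * averagingMatrix n = averagingMatrix n := by
  ext i j
  simpa [mul_apply, ← sum_mul, mulVec, dotProduct] using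
    congrArg (· * (Fintype.card n : ℝ)⁻¹) (congrFun hW i)

theorem averagingMatrix_mul_of_vecMul_one {W : Matrix n n ℝ} (hW : 1 ᵥ* W = 1) :
    averagingMatrix n * W = averagingMatrix n := by
  ext i j
  simpa [mul_apply, ← mul_sum, vecMul, dotProduct] using
    congrArg ((Fintype.card n : ℝ)⁻¹ * ·) (congrFun hW j)

end averagingMatrix

namespace Matrix.IsHermitian

variable {n : Type*} [Fintype n] [DecidableEq n]

theorem eigenvectorBasis_dotProduct_eq_zero {A : Matrix n n ℝ} (hA : A.IsHermitian) {v : n → ℝ}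
    {μ : ℝ} (hv : A *ᵥ v = μ • v) {i : n} (hi : hA.eigenvalues i ≠ μ) :
    (hA.eigenvectorBasis i).ofLp ⬝ᵥ v = 0 := by
  set b := (hA.eigenvectorBasis i).ofLp
  have h : hA.eigenvalues i * (b ⬝ᵥ v) = μ * (b ⬝ᵥ v) := calc
    _ = (A *ᵥ b) ⬝ᵥ v := by rw [hA.mulVec_eigenvectorBasis, smul_dotProduct, smul_eq_mul]
    _ = b ⬝ᵥ (A *ᵥ v) := by
      rw [dotProduct_mulVec, ← mulVec_transpose, (isHermitian_iff_isSymm.1 hA).eq]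
    _ = μ * (b ⬝ᵥ v) := by rw [hv, dotProduct_smul, smul_eq_mul]
  exact (mul_eq_mul_right_iff.1 h).resolve_left hi

theorem sub_averagingMatrix_mulVec_eigenvectorBasis {W : Matrix n n ℝ} (hW : W.IsHermitian)
    (hW1 : W *ᵥ 1 = 1) {i₀ : n} (hi₀ : hW.eigenvalues i₀ = 1)
    (hsimple : ∀ i ≠ i₀, hW.eigenvalues i ≠ 1) (i : n) :
    (W - averagingMatrix n) *ᵥ (hW.eigenvectorBasis i).ofLp
      = (if i = i₀ then 0 else hW.eigenvalues i) • (hW.eigenvectorBasis i).ofLp := by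
  set b := hW.eigenvectorBasis
  have hperp : ∀ j ≠ i₀, (b j).ofLp ⬝ᵥ 1 = 0 := fun j hj =>
    hW.eigenvectorBasis_dotProduct_eq_zero (by rw [hW1, one_smul]) (hsimple j hj)
  rw [sub_mulVec, hW.mulVec_eigenvectorBasis]
  split_ifs with h
  · subst h
    -- the eigenvalue `1` is simple, so `1` is a multiple of its eigenvector `b i`
    have hones : (1 : n → ℝ) = ((b i).ofLp ⬝ᵥ 1) • (b i).ofLp := by
      have := congrArg WithLp.ofLp (b.sum_repr' (toLp 2 1))
      rw [sum_eq_single i (fun j _ hj => by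
        rw [EuclideanSpace.inner_eq_star_dotProduct, star_trivial, dotProduct_comm, hperp j hj,
          zero_smul]) (by simp)] at this
      rw [EuclideanSpace.inner_eq_star_dotProduct, star_trivial, dotProduct_comm] at this
      exact this.symm
    have hc : (b i).ofLp ⬝ᵥ 1 ≠ 0 := fun h => by
      simpa [h] using congrFun hones i
    have hJ : averagingMatrix n *ᵥ (b i).ofLp = (b i).ofLp := by
      have := averagingMatrix_mulVec_one (n := n)
      rw [hones, mulVec_smul] at this
      exact smul_right_injective _ hc this
    rw [hJ, hi₀, one_smul, sub_self, zero_smul]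
  · rw [averagingMatrix_mulVec, hperp i h]
    ext; simp [b]

theorem norm_toLp_vecMul_sub_averagingMatrix_le {W : Matrix n n ℝ} (hW : W.IsHermitian)
    (hW1 : W *ᵥ 1 = 1) {i₀ : n} (hi₀ : hW.eigenvalues i₀ = 1) {ρ : ℝ} (hρ0 : 0 ≤ ρ)
    (hρ : ∀ i ≠ i₀, |hW.eigenvalues i| ≤ ρ) (hρ1 : ρ < 1) (v : n → ℝ) :
    ‖toLp 2 (v ᵥ* (W - averagingMatrix n))‖ ≤ ρ * ‖toLp 2 v‖ := by
  have hsimple : ∀ i ≠ i₀, hW.eigenvalues i ≠ 1 := fun i hi h => by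
    have := hρ i hi
    rw [h, abs_one] at this
    linarith
  rw [← mulVec_transpose, transpose_sub, averagingMatrix_transpose,
    (isHermitian_iff_isSymm.1 hW).eq]
  refine hW.eigenvectorBasis.norm_map_le_of_apply_eq_smul
    (T := toLpLin 2 2 (W - averagingMatrix n))
    (μ := fun i => if i = i₀ then 0 else hW.eigenvalues i) (fun i => ?_) (fun i => ?_) (toLp 2 v)
  · rw [toLpLin_apply, hW.sub_averagingMatrix_mulVec_eigenvectorBasis hW1 hi₀ hsimple]
    rfl
  · split_ifs with h
    · simpa using hρ0
    · simpa using hρ i h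

end Matrix.IsHermitian

theorem consensus_error_step {m n R : Type*} [Fintype n] [Ring R] {W J : Matrix n n R}
    (hWJ : W * J = J) (hJW : J * W = J) (hJJ : J * J = J) (A B : Matrix m n R) :
    (A - B) * W - (A - B) * W * J = (A - A * J - B) * (W - J) := by
  simp only [Matrix.sub_mul, Matrix.mul_sub, Matrix.mul_assoc, hWJ, hJW, hJJ]
  abel

theorem stmt19 {d N : ℕ} (hN : 2 ≤ N) (W : Matrix (Fin N) (Fin N) ℝ)
    (hherm : W.IsHermitian)
    (hrow : W *ᵥ (fun _ => 1) = fun _ => 1)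
    (hcol : (fun _ => (1 : ℝ)) ᵥ* W = fun _ => 1)
    (i0 : Fin N) (hi0 : hherm.eigenvalues i0 = 1)
    (ρ : ℝ)
    (hρ : ρ = (Finset.univ.erase i0).sup'
      (by
        obtain ⟨j, hj⟩ := Fintype.exists_ne_of_one_lt_card (by simpa using (show 1 < N by omega)) i0
        exact ⟨j, Finset.mem_erase.mpr ⟨hj, Finset.mem_univ j⟩⟩)
      (fun i => |hherm.eigenvalues i|))
    (hρlt : ρ < 1) (γ : ℝ)
    (X G : ℕ → Matrix (Fin d) (Fin N) ℝ)
    (hinit : ∀ i n m, X 1 i n = X 1 i m)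
    (hrec : ∀ t, 1 ≤ t → X (t + 1) = (X t - γ • G t) * W)
    (Xbar : ℕ → Matrix (Fin d) (Fin N) ℝ)
    (hXbar : ∀ t, Xbar t = X t * ((N : ℝ)⁻¹ • Matrix.of (fun _ _ => (1 : ℝ))))
    (T : ℕ) :
    ∑ t ∈ Finset.Icc 1 T, (∑ i, ∑ j, (X t i j - Xbar t i j) ^ 2)
      ≤ γ ^ 2 * ρ ^ 2 / (1 - ρ) ^ 2
        * ∑ t ∈ Finset.Icc 1 T, (∑ i, ∑ j, (G t i j) ^ 2) := by
  have hJ : (N : ℝ)⁻¹ • of (fun _ _ => (1 : ℝ)) = averagingMatrix (Fin N) := by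
    simp [averagingMatrix]
  -- the product in `hXbar` was elaborated with the `CStarMatrix` instance; restate it
  replace hXbar (t : ℕ) : Xbar t = X t * averagingMatrix (Fin N) := by rw [hXbar t, hJ]; rfl
  have hρ_ge : ∀ i ≠ i0, |hherm.eigenvalues i| ≤ ρ := fun i hi =>
    hρ ▸ le_sup' (fun i => |hherm.eigenvalues i|) (mem_erase.2 ⟨hi, mem_univ i⟩)
  have hρ0 : 0 ≤ ρ := by
    obtain ⟨j, hj⟩ := Fintype.exists_ne_of_one_lt_card (by rw [Fintype.card_fin]; omega) i0
    exact (abs_nonneg _).trans (hρ_ge j hj)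
  have hcontract (A : Matrix (Fin d) (Fin N) ℝ) : ‖A * (W - averagingMatrix (Fin N))‖ ≤ ρ * ‖A‖ :=
    frobenius_norm_mul_le_of_norm_vecMul_le hρ0
      (hherm.norm_toLp_vecMul_sub_averagingMatrix_le hrow hi0 hρ0 hρ_ge hρlt) A
  set s : ℕ → ℝ := fun t => ‖X (t + 1) - Xbar (t + 1)‖
  have hs0 : s 0 = 0 := by
    simp only [s, zero_add, hXbar, mul_averagingMatrix_of_forall_eq hinit, sub_self, norm_zero]
  have hstep (t : ℕ) : s (t + 1) ≤ ρ * (s t + ‖γ‖ * ‖G (t + 1)‖) := by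
    simp only [s, hXbar]
    rw [hrec (t + 1) (by omega), consensus_error_step (mul_averagingMatrix_of_mulVec_one hrow)
      (averagingMatrix_mul_of_vecMul_one hcol) averagingMatrix_mul_self]
    grw [hcontract, norm_sub_le, norm_smul]
  have hshift (f : ℕ → ℝ) : ∑ t ∈ Icc 1 T, f t = ∑ t ∈ range T, f (t + 1) := by
    rw [range_eq_Ico, sum_Ico_add', zero_add, Ico_add_one_right_eq_Icc]
  have hsum := sum_range_sq_le_of_le_mul_add (s := s) (g := fun t => ‖γ‖ * ‖G (t + 1)‖)
    hρ0 hρlt (fun _ => norm_nonneg _) hs0 hstep T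
  simp only [hshift, ← frobenius_norm_sq_eq_sum_sq, ← Matrix.sub_apply]
  simpa [s, mul_pow, mul_sum, mul_assoc, mul_div_assoc, mul_left_comm] using hsum
end
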